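/- Let C ∈ ℂ^{m×n}, Ω ∈ ℂ^{n×n} Hermitian, A = -(1/2)C†C - iΩ. If A is Hurwitz stable, then for every eigenvalue λ of A, any eigenvector v of A with C v = 0 must be zero; moreover unobservability of (C,A) would imply A has a purely imaginary eigenvalue, a contradiction. Hence Hurwitz stability, observability of (C,A), and controllability of (A, -C†) are pairwise equivalent. -/

import Mathlib

/-!
Since `Ω` is Hermitian, `A + Aᴴ = -CᴴC`, so `2 Re ⟪v, A v⟫ = -‖C v‖²`. For an eigenpair
`A v = μ v` this reads `2 Re μ ‖v‖² = -‖C v‖²`: every eigenvalue has `Re μ ≤ 0`, with equality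
exactly when the eigenvector lies in `Ker C`. Hence `A` is Hurwitz iff no eigenvector of `A` lies in
`Ker C`, which by the Hautus test (the unobservable subspace is `A`-invariant, so if nonzero it
contains an eigenvector) is observability of `(C, A)`. On `Ker C` the identity `Aᴴ = -CᴴC - A`
turns eigenvectors of `A` into eigenvectors of `Aᴴ`, so `(C, A)` is observable iff `(C, Aᴴ)` is,
i.e. iff `(A, -Cᴴ)` is controllable.
-/

open Matrix

section Hautus

variable {K ι κ : Type*} [Field K] [Fintype ι]

def NoEigenvectorInKer (C : Matrix κ ι K) (A : Matrix ι ι K) : Prop :=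
  ∀ (μ : K) (v : ι → K), A *ᵥ v = μ • v → C *ᵥ v = 0 → v = 0

variable [DecidableEq ι]

theorem Matrix.mem_spectrum_iff_exists_mulVec_eq_smul {A : Matrix ι ι K} {μ : K} :
    μ ∈ spectrum K A ↔ ∃ v, v ≠ 0 ∧ A *ᵥ v = μ • v := by
  rw [← spectrum_toLin', ← Module.End.hasEigenvalue_iff_mem_spectrum,
    Module.End.hasEigenvalue_iff, Submodule.ne_bot_iff]
  simp only [Module.End.mem_eigenspace_iff, toLin'_apply]
  exact exists_congr fun v => and_comm

theorem Matrix.pow_mulVec_of_mulVec_eq_smul {A : Matrix ι ι K} {μ : K} {v : ι → K}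
    (hv : A *ᵥ v = μ • v) (k : ℕ) : (A ^ k) *ᵥ v = μ ^ k • v := by
  induction k with
  | zero => simp
  | succ k ih => rw [pow_succ', ← mulVec_mulVec, ih, mulVec_smul, hv, smul_smul, pow_succ]

def IsObservable (C : Matrix κ ι K) (A : Matrix ι ι K) : Prop :=
  ∀ v, (∀ k : ℕ, (C * A ^ k) *ᵥ v = 0) → v = 0

def unobservableSubspace (C : Matrix κ ι K) (A : Matrix ι ι K) : Submodule K (ι → K) :=
  ⨅ k : ℕ, LinearMap.ker (C * A ^ k).mulVecLin

variable {C : Matrix κ ι K} {A : Matrix ι ι K}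

theorem mem_unobservableSubspace {v : ι → K} :
    v ∈ unobservableSubspace C A ↔ ∀ k : ℕ, (C * A ^ k) *ᵥ v = 0 := by
  simp [unobservableSubspace]

theorem mulVec_mem_unobservableSubspace {v : ι → K} (hv : v ∈ unobservableSubspace C A) :
    A *ᵥ v ∈ unobservableSubspace C A := by
  rw [mem_unobservableSubspace] at hv ⊢
  intro k
  rw [mulVec_mulVec, Matrix.mul_assoc, ← pow_succ]
  exact hv (k + 1)

theorem IsObservable.noEigenvectorInKer (h : IsObservable C A) : NoEigenvectorInKer C A :=
  fun _ v hv hCv => h v fun k => by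
    rw [← mulVec_mulVec, pow_mulVec_of_mulVec_eq_smul hv, mulVec_smul, hCv, smul_zero]

theorem isObservable_iff_noEigenvectorInKer [IsAlgClosed K] :
    IsObservable C A ↔ NoEigenvectorInKer C A := by
  refine ⟨IsObservable.noEigenvectorInKer, fun h v hv => ?_⟩
  by_contra hv0
  set N := unobservableSubspace C A
  have : Nontrivial N :=
    ⟨⟨v, mem_unobservableSubspace.mpr hv⟩, 0, fun h => hv0 (congrArg Subtype.val h)⟩
  obtain ⟨μ, hμ⟩ := Module.End.exists_eigenvalue
    (A.mulVecLin.restrict (p := N) (q := N) fun _ => mulVec_mem_unobservableSubspace)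
  obtain ⟨u, hu⟩ := hμ.exists_hasEigenvector
  have hAu : A *ᵥ (u : ι → K) = μ • (u : ι → K) := congrArg Subtype.val hu.apply_eq_smul
  have hCu : C *ᵥ (u : ι → K) = 0 := by simpa using mem_unobservableSubspace.mp u.2 0
  exact hu.2 (Subtype.ext (h μ u hAu hCu))

end Hautus

section Adjoint

variable {K ι κ : Type*} [Field K] [StarRing K] [Fintype ι]

def IsControllable [DecidableEq ι] (A : Matrix ι ι K) (B : Matrix ι κ K) : Prop :=
  ∀ w, (∀ k : ℕ, (A ^ k * B)ᴴ *ᵥ w = 0) → w = 0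

theorem isControllable_neg_conjTranspose_iff [DecidableEq ι] {C : Matrix κ ι K} {A : Matrix ι ι K} :
    IsControllable A (-Cᴴ) ↔ IsObservable C Aᴴ := by
  have h : ∀ k : ℕ, (A ^ k * -Cᴴ)ᴴ = -(C * Aᴴ ^ k) := fun k => by
    rw [conjTranspose_mul, conjTranspose_neg, conjTranspose_conjTranspose, conjTranspose_pow,
      Matrix.neg_mul]
  simp only [IsControllable, IsObservable, h, neg_mulVec, neg_eq_zero]

variable [Fintype κ] {C : Matrix κ ι K} {A : Matrix ι ι K}

theorem NoEigenvectorInKer.conjTranspose (hAC : A + Aᴴ = -(Cᴴ * C))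
    (h : NoEigenvectorInKer C A) : NoEigenvectorInKer C Aᴴ := by
  intro μ v hv hCv
  refine h (-μ) v ?_ hCv
  have hsum : (A + Aᴴ) *ᵥ v = 0 := by
    rw [hAC, neg_mulVec, ← mulVec_mulVec, hCv, mulVec_zero, neg_zero]
  rw [add_mulVec, hv] at hsum
  rw [neg_smul]
  exact eq_neg_of_add_eq_zero_left hsum

theorem noEigenvectorInKer_conjTranspose_iff (hAC : A + Aᴴ = -(Cᴴ * C)) :
    NoEigenvectorInKer C Aᴴ ↔ NoEigenvectorInKer C A := by
  refine ⟨fun h => ?_, NoEigenvectorInKer.conjTranspose hAC⟩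
  simpa using h.conjTranspose (by rwa [conjTranspose_conjTranspose, add_comm])

end Adjoint

section Complex

open ComplexOrder

variable {ι κ : Type*} [Fintype κ]

noncomputable def passiveDrift (C : Matrix κ ι ℂ) (Ω : Matrix ι ι ℂ) : Matrix ι ι ℂ :=
  -((1 / 2 : ℂ) • (Cᴴ * C)) - Complex.I • Ω

theorem passiveDrift_add_conjTranspose (C : Matrix κ ι ℂ) {Ω : Matrix ι ι ℂ}
    (hΩ : Ω.IsHermitian) :
    passiveDrift C Ω + (passiveDrift C Ω)ᴴ = -(Cᴴ * C) := by
  simp only [passiveDrift, conjTranspose_sub, conjTranspose_neg, conjTranspose_smul,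
    conjTranspose_mul, conjTranspose_conjTranspose, hΩ.eq, Complex.star_def, Complex.conj_I,
    map_div₀, map_one, Complex.conj_ofNat]
  module

theorem re_dotProduct_star_self_pos {w : κ → ℂ} (hw : w ≠ 0) : 0 < (star w ⬝ᵥ w).re :=
  (Complex.pos_iff.mp (dotProduct_star_self_pos_iff.mpr hw)).1

variable [Fintype ι] {C : Matrix κ ι ℂ} {A : Matrix ι ι ℂ}

theorem two_mul_re_dotProduct_mulVec_self (hAC : A + Aᴴ = -(Cᴴ * C)) (v : ι → ℂ) :
    2 * (star v ⬝ᵥ A *ᵥ v).re = -(star (C *ᵥ v) ⬝ᵥ C *ᵥ v).re := by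
  have hAdj : star v ⬝ᵥ Aᴴ *ᵥ v = star (star v ⬝ᵥ A *ᵥ v) := by
    rw [star_dotProduct, star_mulVec, ← dotProduct_mulVec, conjTranspose_conjTranspose]
  have hC : star v ⬝ᵥ (Cᴴ * C) *ᵥ v = star (C *ᵥ v) ⬝ᵥ C *ᵥ v := by
    rw [← mulVec_mulVec, dotProduct_mulVec, ← star_mulVec]
  have h := congrArg (fun M => (star v ⬝ᵥ M *ᵥ v).re) hAC
  simp only [add_mulVec, dotProduct_add, neg_mulVec, dotProduct_neg, hAdj, hC, Complex.add_re,
    Complex.star_def, Complex.conj_re, Complex.neg_re] at h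
  linarith

theorem two_mul_re_mul_re_dotProduct_star_self (hAC : A + Aᴴ = -(Cᴴ * C)) {μ : ℂ}
    {v : ι → ℂ} (hv : A *ᵥ v = μ • v) :
    2 * μ.re * (star v ⬝ᵥ v).re = -(star (C *ᵥ v) ⬝ᵥ C *ᵥ v).re := by
  have him : (star v ⬝ᵥ v).im = 0 := (Complex.nonneg_iff.mp (dotProduct_star_self_nonneg v)).2.symm
  rw [← two_mul_re_dotProduct_mulVec_self hAC, hv, dotProduct_smul, smul_eq_mul,
    Complex.mul_re, him, mul_zero, sub_zero, mul_assoc]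

def IsHurwitz [DecidableEq ι] (A : Matrix ι ι ℂ) : Prop :=
  ∀ μ ∈ spectrum ℂ A, μ.re < 0

theorem isHurwitz_iff_noEigenvectorInKer [DecidableEq ι] (hAC : A + Aᴴ = -(Cᴴ * C)) :
    IsHurwitz A ↔ NoEigenvectorInKer C A := by
  constructor
  · intro hH μ v hv hCv
    by_contra hv0
    have hμ := hH μ (mem_spectrum_iff_exists_mulVec_eq_smul.mpr ⟨v, hv0, hv⟩)
    have key := two_mul_re_mul_re_dotProduct_star_self hAC hv
    rw [hCv, dotProduct_zero, Complex.zero_re, neg_zero] at key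
    nlinarith [re_dotProduct_star_self_pos hv0]
  · intro h μ hμ
    obtain ⟨v, hv0, hv⟩ := mem_spectrum_iff_exists_mulVec_eq_smul.mp hμ
    have hCv : C *ᵥ v ≠ 0 := fun hCv => hv0 (h μ v hv hCv)
    have key := two_mul_re_mul_re_dotProduct_star_self hAC hv
    nlinarith [re_dotProduct_star_self_pos hv0, re_dotProduct_star_self_pos hCv]

end Complex

theorem stmt_6 (m n : ℕ) (C : Matrix (Fin m) (Fin n) ℂ)
    (Ω : Matrix (Fin n) (Fin n) ℂ) (hΩ : Ω.IsHermitian)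
    (A : Matrix (Fin n) (Fin n) ℂ)
    (hA : A = -((1 / 2 : ℂ) • (Cᴴ * C)) - Complex.I • Ω) :
    -- Hurwitz stability kills eigenvectors of A in Ker C
    ((∀ μ : ℂ, μ ∈ spectrum ℂ A → μ.re < 0) →
      ∀ (lam : ℂ) (v : Fin n → ℂ),
        A.mulVec v = lam • v → C.mulVec v = 0 → v = 0) ∧
    -- Hurwitz stability ↔ observability of (C, A)
    ((∀ μ : ℂ, μ ∈ spectrum ℂ A → μ.re < 0) ↔
      (∀ v : Fin n → ℂ, (∀ k : ℕ, (C * A ^ k).mulVec v = 0) → v = 0)) ∧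
    -- observability of (C, A) ↔ controllability of (A, -Cᴴ)
    ((∀ v : Fin n → ℂ, (∀ k : ℕ, (C * A ^ k).mulVec v = 0) → v = 0) ↔
      (∀ w : Fin n → ℂ,
        (∀ k : ℕ, ((A ^ k * (-Cᴴ))ᴴ).mulVec w = 0) → w = 0)) := by
  have hAC : A + Aᴴ = -(Cᴴ * C) := hA ▸ passiveDrift_add_conjTranspose C hΩ
  have hHurwitz : IsHurwitz A ↔ NoEigenvectorInKer C A := isHurwitz_iff_noEigenvectorInKer hAC
  have hObs : IsObservable C A ↔ NoEigenvectorInKer C A := isObservable_iff_noEigenvectorInKer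
  have hCtrl : IsControllable A (-Cᴴ) ↔ NoEigenvectorInKer C A := by
    rw [isControllable_neg_conjTranspose_iff, isObservable_iff_noEigenvectorInKer,
      noEigenvectorInKer_conjTranspose_iff hAC]
  exact ⟨hHurwitz.mp, hHurwitz.trans hObs.symm, hObs.trans hCtrl.symm⟩
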